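/- arXiv:1810.03231 — 5 statements merged into one kernel-verified Lean document; each statement's English description precedes it below -/
import Mathlib

section
/- With UQ, UP, e₀, e₇ as in the context, one has the identity (α·γ⁻³·q⁻⁶·s⁻¹) · (UQ − q²β⁻¹·1₈) · (UP − qsγ⁻¹·1₈) · (UP − qsγα·1₈) · (UP − qsγβ·1₈) · e₀ = (1 − αq⁻¹)(1 − βq⁻¹)(1 − γ²α²q⁻¹)(1 − γ⁻²q⁻¹) · e₇ in F⁸, where 1₈ is the 8×8 identity matrix. (Here q^{13/2} = q⁶s and q^{3/2} = qs; this is the matrix identity underlying the ordinary projector e⁰_ord in Proposition 7.6(3) of Hsieh–Yamana: the (α⁻¹,γ)-stabilization φ‡ = e⁰_ord φ⁰_χ equals (1−αq⁻¹)(1−βq⁻¹)(1−γ²α²q⁻¹)(1−γ⁻²q⁻¹)·φ†.) -/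
/-
On vectors constant on the pairs (φ_1, φ_{s₁}), (φ_{s₂}, φ_{s₂s₁}), (φ_{s₁s₂s₁}, φ_{s₁s₂}),
(φ_{s₁s₂s₁s₂}, φ_{s₂s₁s₂}) — a subspace containing e₀ — `U^P` acts as `sγ` times the lower
triangular matrix `reducedUP q ![αβ, α, β, 1]` with diagonal `q • ![αβ, α, β, 1]`
(using `γ⁻¹ = αβγ`). The three `U^P`-factors remove the first three eigencomponents and leave
`(qsγ)³ (1 - α/q)(1 - β/q)(1 - αβ/q)` times the last pair sum (note `αβ = γ⁻²`), which
`U^Q - q²β⁻¹` sends to `(q²α⁻¹ - qβ⁻¹) φ_{s₁s₂s₁s₂} = q²α⁻¹ (1 - γ²α²/q) φ_{s₁s₂s₁s₂}`.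
-/

open Matrix

theorem Matrix.sub_smul_one_mulVec_mulVec_of_intertwine {R m n : Type*} [CommRing R] [Fintype m]
    [Fintype n] [DecidableEq m] [DecidableEq n] {A : Matrix m m R} {P : Matrix m n R}
    {B : Matrix n n R} (h : ∀ v, A *ᵥ (P *ᵥ v) = P *ᵥ (B *ᵥ v)) (c : R) (v : n → R) :
    (A - c • 1) *ᵥ (P *ᵥ v) = P *ᵥ ((B - c • 1) *ᵥ v) := by
  rw [sub_mulVec, sub_mulVec, h, smul_mulVec, smul_mulVec, one_mulVec, one_mulVec,
    mulVec_sub, mulVec_smul]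

section

variable {F : Type*} [Field F]

def reducedUP (q : F) (l : Fin 4 → F) : Matrix (Fin 4) (Fin 4) F :=
  of fun i j => if j < i then (q - 1) * l j else if i = j then q * l i else 0

theorem reducedUP_sub_mulVec_sub_mulVec_sub_mulVec_one (q a b c d : F) :
    (reducedUP q ![a, b, c, d] - (q * a) • 1) *ᵥ ((reducedUP q ![a, b, c, d] - (q * b) • 1) *ᵥ
      ((reducedUP q ![a, b, c, d] - (q * c) • 1) *ᵥ 1)) =
      ((q * d - a) * (q * d - b) * (q * d - c)) • Pi.single 3 1 := by
  ext i
  fin_cases i <;>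
    simp [reducedUP, mulVec, dotProduct, Fin.sum_univ_four, one_apply] <;> ring

def pairSums : Matrix (Fin 8) (Fin 4) F :=
  !![1, 0, 0, 0; 1, 0, 0, 0; 0, 1, 0, 0; 0, 1, 0, 0; 0, 0, 1, 0; 0, 0, 1, 0; 0, 0, 0, 1; 0, 0, 0, 1]

def heckeUP (q s α β γ : F) : Matrix (Fin 8) (Fin 8) F :=
  !![q*s*γ⁻¹, 0, 0, 0, 0, 0, 0, 0;
     0, q*s*γ⁻¹, 0, 0, 0, 0, 0, 0;
     s*(q-1)*γ⁻¹, 0, α*γ*q*s, 0, 0, 0, 0, 0;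
     0, s*(q-1)*γ⁻¹, 0, α*γ*q*s, 0, 0, 0, 0;
     (q-1)*γ⁻¹*s⁻¹, (q-1)^2*γ⁻¹*s⁻¹, 0, α*γ*s*(q-1), β*γ*q*s, 0, 0, 0;
     0, s*(q-1)*γ⁻¹, s*(q-1)*γ⁻¹*β⁻¹, 0, 0, β*γ*q*s, 0, 0;
     (q-1)^2*γ⁻¹*q⁻¹*s⁻¹, (q^3-2*q^2+2*q-1)*γ⁻¹*q⁻¹*s⁻¹, α*γ*(q-1)*s⁻¹, α*γ*(q-1)^2*s⁻¹, β*γ*s*(q-1), 0, γ*q*s, 0;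
     (q-1)*γ⁻¹*s⁻¹, (q-1)^2*γ⁻¹*s⁻¹, 0, α*γ*s*(q-1), 0, s*(q-1)*γ⁻¹*α⁻¹, 0, γ*q*s]

def heckeUQ (q α β : F) : Matrix (Fin 8) (Fin 8) F :=
  !![q^2*α, 0, 0, 0, 0, 0, 0, 0;
     α*q*(q-1), q^2*β, 0, 0, 0, 0, 0, 0;
     0, 0, q^2*α, 0, 0, 0, 0, 0;
     0, q*(q-1)*(β+1), α*q*(q-1), q^2*β⁻¹, 0, 0, 0, 0;
     (α+1)*(q-1), (q-1)^2, α*(q-1)^2, (q^2-q)*β⁻¹, q^2*α⁻¹, β*q*(q-1), 0, 0;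
     0, 0, α*q*(q-1), 0, 0, q^2*β, 0, 0;
     α*q⁻¹*(q-1)^2, β*(q-1), (q-1)*(α*(q-1+q⁻¹)+1), 0, 0, (q-1)^2*(β+1), q^2*α⁻¹, (q^2-q)*β⁻¹;
     α*(q-1), 0, α*(q-1)^2, 0, 0, q*(q-1)*(β+1), 0, q^2*β⁻¹]

theorem heckeUP_mulVec_pairSums {q s α β γ : F} (hs : s ≠ 0) (hsq : s ^ 2 = q)
    (habg : α * β * γ ^ 2 = 1) (v : Fin 4 → F) :
    heckeUP q s α β γ *ᵥ (pairSums *ᵥ v) =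
      pairSums *ᵥ (((s * γ) • reducedUP q ![α * β, α, β, 1]) *ᵥ v) := by
  subst hsq
  ext i
  fin_cases i <;>
    simp [heckeUP, pairSums, reducedUP, mulVec, dotProduct, Fin.sum_univ_succ] <;>
    grind

theorem heckeUQ_sub_mulVec_pairSums_single (q α β : F) :
    (heckeUQ q α β - (q ^ 2 * β⁻¹) • 1) *ᵥ (pairSums *ᵥ Pi.single 3 1) =
      (q ^ 2 * α⁻¹ - q * β⁻¹) • Pi.single 6 1 := by
  ext i
  fin_cases i <;> simp [heckeUQ, pairSums, mulVec, dotProduct, Fin.sum_univ_succ, one_apply]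
  ring

end

theorem hsieh_yamana_ordinary_projector_identity_general
    {F : Type*} [Field F] (q s α β γ : F)
    (hs0 : s ≠ 0) (hα : α ≠ 0) (hγ : γ ≠ 0)
    (hsq : s ^ 2 = q) (habg : α * β * γ ^ 2 = 1)
    (UQ UP : Matrix (Fin 8) (Fin 8) F)
    (hUQ : UQ = !![q^2*α, 0, 0, 0, 0, 0, 0, 0;
                   α*q*(q-1), q^2*β, 0, 0, 0, 0, 0, 0;
                   0, 0, q^2*α, 0, 0, 0, 0, 0;
                   0, q*(q-1)*(β+1), α*q*(q-1), q^2*β⁻¹, 0, 0, 0, 0;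
                   (α+1)*(q-1), (q-1)^2, α*(q-1)^2, (q^2-q)*β⁻¹, q^2*α⁻¹, β*q*(q-1), 0, 0;
                   0, 0, α*q*(q-1), 0, 0, q^2*β, 0, 0;
                   α*q⁻¹*(q-1)^2, β*(q-1), (q-1)*(α*(q-1+q⁻¹)+1), 0, 0, (q-1)^2*(β+1), q^2*α⁻¹, (q^2-q)*β⁻¹;
                   α*(q-1), 0, α*(q-1)^2, 0, 0, q*(q-1)*(β+1), 0, q^2*β⁻¹])
    (hUP : UP = !![q*s*γ⁻¹, 0, 0, 0, 0, 0, 0, 0;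
                   0, q*s*γ⁻¹, 0, 0, 0, 0, 0, 0;
                   s*(q-1)*γ⁻¹, 0, α*γ*q*s, 0, 0, 0, 0, 0;
                   0, s*(q-1)*γ⁻¹, 0, α*γ*q*s, 0, 0, 0, 0;
                   (q-1)*γ⁻¹*s⁻¹, (q-1)^2*γ⁻¹*s⁻¹, 0, α*γ*s*(q-1), β*γ*q*s, 0, 0, 0;
                   0, s*(q-1)*γ⁻¹, s*(q-1)*γ⁻¹*β⁻¹, 0, 0, β*γ*q*s, 0, 0;
                   (q-1)^2*γ⁻¹*q⁻¹*s⁻¹, (q^3-2*q^2+2*q-1)*γ⁻¹*q⁻¹*s⁻¹, α*γ*(q-1)*s⁻¹, α*γ*(q-1)^2*s⁻¹, β*γ*s*(q-1), 0, γ*q*s, 0;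
                   (q-1)*γ⁻¹*s⁻¹, (q-1)^2*γ⁻¹*s⁻¹, 0, α*γ*s*(q-1), 0, s*(q-1)*γ⁻¹*α⁻¹, 0, γ*q*s]) :
    (α * γ⁻¹^3 * q⁻¹^6 * s⁻¹) •
        (((UQ - (q^2*β⁻¹) • (1 : Matrix (Fin 8) (Fin 8) F)) *
          (UP - (q*s*γ⁻¹) • (1 : Matrix (Fin 8) (Fin 8) F)) *
          (UP - (q*s*γ*α) • (1 : Matrix (Fin 8) (Fin 8) F)) *
          (UP - (q*s*γ*β) • (1 : Matrix (Fin 8) (Fin 8) F))) *ᵥ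
            ![1, 1, 1, 1, 1, 1, 1, 1]) =
      ((1 - α*q⁻¹) * (1 - β*q⁻¹) * (1 - γ^2*α^2*q⁻¹) * (1 - γ⁻¹^2*q⁻¹)) •
        ![0, 0, 0, 0, 0, 0, 1, 0] := by
  obtain rfl : UP = heckeUP q s α β γ := hUP
  obtain rfl : UQ = heckeUQ q α β := hUQ
  have hP := sub_smul_one_mulVec_mulVec_of_intertwine (heckeUP_mulVec_pairSums hs0 hsq habg)
  have hshift : ∀ (c : F) (M : Matrix (Fin 4) (Fin 4) F),
      (s * γ) • M - (s * γ * c) • 1 = (s * γ) • (M - c • 1) := fun c M => by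
    rw [smul_sub, smul_smul]
  have he₀ : ![1, 1, 1, 1, 1, 1, 1, 1] = pairSums *ᵥ (1 : Fin 4 → F) := by
    ext i; fin_cases i <;> simp [pairSums, mulVec, dotProduct, Fin.sum_univ_succ]
  have he₇ : ![0, 0, 0, 0, 0, 0, 1, 0] = (Pi.single 6 1 : Fin 8 → F) := by
    ext i; fin_cases i <;> rfl
  have hγinv : γ⁻¹ = γ * (α * β) := inv_eq_of_mul_eq_one_right (by linear_combination habg)
  rw [show q * s * γ⁻¹ = s * γ * (q * (α * β)) by rw [hγinv]; ring,
    show q * s * γ * α = s * γ * (q * α) by ring, show q * s * γ * β = s * γ * (q * β) by ring]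
  simp only [← mulVec_mulVec, he₀, he₇]
  rw [hP, hP, hP, hshift, hshift, hshift]
  simp only [smul_mulVec, mulVec_smul]
  rw [reducedUP_sub_mulVec_sub_mulVec_sub_mulVec_one]
  simp only [mulVec_smul]
  rw [heckeUQ_sub_mulVec_pairSums_single]
  simp only [smul_smul]
  congr 1
  subst hsq
  obtain rfl : β = (α * γ ^ 2)⁻¹ := eq_inv_of_mul_eq_one_left (by linear_combination habg)
  field_simp

/-- The matrix identity underlying the ordinary projector `e⁰_ord` in
Proposition 7.6(3) of Hsieh–Yamana. -/
theorem hsieh_yamana_ordinary_projector_identity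
    {F : Type*} [Field F] (q s α β γ : F)
    (hq : q ≠ 0) (hs0 : s ≠ 0) (hα : α ≠ 0) (hβ : β ≠ 0) (hγ : γ ≠ 0)
    (hsq : s ^ 2 = q) (habg : α * β * γ ^ 2 = 1)
    (UQ UP : Matrix (Fin 8) (Fin 8) F)
    (hUQ : UQ = !![q^2*α, 0, 0, 0, 0, 0, 0, 0;
                   α*q*(q-1), q^2*β, 0, 0, 0, 0, 0, 0;
                   0, 0, q^2*α, 0, 0, 0, 0, 0;
                   0, q*(q-1)*(β+1), α*q*(q-1), q^2*β⁻¹, 0, 0, 0, 0;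
                   (α+1)*(q-1), (q-1)^2, α*(q-1)^2, (q^2-q)*β⁻¹, q^2*α⁻¹, β*q*(q-1), 0, 0;
                   0, 0, α*q*(q-1), 0, 0, q^2*β, 0, 0;
                   α*q⁻¹*(q-1)^2, β*(q-1), (q-1)*(α*(q-1+q⁻¹)+1), 0, 0, (q-1)^2*(β+1), q^2*α⁻¹, (q^2-q)*β⁻¹;
                   α*(q-1), 0, α*(q-1)^2, 0, 0, q*(q-1)*(β+1), 0, q^2*β⁻¹])
    (hUP : UP = !![q*s*γ⁻¹, 0, 0, 0, 0, 0, 0, 0;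
                   0, q*s*γ⁻¹, 0, 0, 0, 0, 0, 0;
                   s*(q-1)*γ⁻¹, 0, α*γ*q*s, 0, 0, 0, 0, 0;
                   0, s*(q-1)*γ⁻¹, 0, α*γ*q*s, 0, 0, 0, 0;
                   (q-1)*γ⁻¹*s⁻¹, (q-1)^2*γ⁻¹*s⁻¹, 0, α*γ*s*(q-1), β*γ*q*s, 0, 0, 0;
                   0, s*(q-1)*γ⁻¹, s*(q-1)*γ⁻¹*β⁻¹, 0, 0, β*γ*q*s, 0, 0;
                   (q-1)^2*γ⁻¹*q⁻¹*s⁻¹, (q^3-2*q^2+2*q-1)*γ⁻¹*q⁻¹*s⁻¹, α*γ*(q-1)*s⁻¹, α*γ*(q-1)^2*s⁻¹, β*γ*s*(q-1), 0, γ*q*s, 0;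
                   (q-1)*γ⁻¹*s⁻¹, (q-1)^2*γ⁻¹*s⁻¹, 0, α*γ*s*(q-1), 0, s*(q-1)*γ⁻¹*α⁻¹, 0, γ*q*s]) :
    (α * γ⁻¹^3 * q⁻¹^6 * s⁻¹) •
        (((UQ - (q^2*β⁻¹) • (1 : Matrix (Fin 8) (Fin 8) F)) *
          (UP - (q*s*γ⁻¹) • (1 : Matrix (Fin 8) (Fin 8) F)) *
          (UP - (q*s*γ*α) • (1 : Matrix (Fin 8) (Fin 8) F)) *
          (UP - (q*s*γ*β) • (1 : Matrix (Fin 8) (Fin 8) F))) *ᵥ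
            ![1, 1, 1, 1, 1, 1, 1, 1]) =
      ((1 - α*q⁻¹) * (1 - β*q⁻¹) * (1 - γ^2*α^2*q⁻¹) * (1 - γ⁻¹^2*q⁻¹)) •
        ![0, 0, 0, 0, 0, 0, 1, 0] :=
  hsieh_yamana_ordinary_projector_identity_general q s α β γ hs0 hα hγ hsq habg UQ UP hUQ hUP
end

section
/- With UQ, UP, e₀, e₇ as in the context, one has the identity (α³·γ⁻¹·q⁻⁷·s⁻¹) · (UP − qsγβ·1₈) · (UQ − q²α·1₈) · (UQ − q²β·1₈) · (UQ − q²β⁻¹·1₈) · e₀ = (α + 1)(1 − αq⁻¹)(1 − βq⁻¹)(1 − γ²α²q⁻¹)(1 − γ⁻²q⁻¹) · e₇ in F⁸, where 1₈ is the 8×8 identity matrix. (Here q^{15/2} = q⁷s; this is the identity φ♭ = (α+1)·φ‡ of Proposition 7.6(3) of Hsieh–Yamana, comparing the two stabilizations of the spherical vector.) -/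
/-!
The vectors whose `φ_w`- and `φ_{w s₂}`-coordinates agree form a `U^Q`-stable subspace containing
`e₀`, on which `U^Q` is lower triangular with diagonal `q²α, q²β, q²β⁻¹, q²α⁻¹`. So the three
`U^Q`-factors send `e₀` to a multiple of `φ_{s₁s₂s₁} + φ_{s₁s₂s₁s₂}`, which `U^P - qsγβ` maps to a
multiple of `φ_{s₁s₂s₁s₂} = e₇`; it remains to compare scalars using `αβγ² = 1`.
-/

open Matrix

section

variable {F : Type*} [Field F]

/-- The vector with coordinates `x, y, z, w` at `φ_1, φ_{s₁}, φ_{s₂s₁}, φ_{s₁s₂s₁}`, repeated at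
`φ_{s₂}, φ_{s₁s₂}, φ_{s₂s₁s₂}, φ_{s₁s₂s₁s₂}`. -/
def pairedVec (x y z w : F) : Fin 8 → F := ![x, y, x, z, w, y, w, z]

theorem heckeUQ_sub_smul_one_mulVec_pairedVec {q : F} (hq : q ≠ 0) (α β t x y z w : F) :
    (heckeUQ q α β - t • (1 : Matrix (Fin 8) (Fin 8) F)) *ᵥ pairedVec x y z w =
      pairedVec ((q^2*α - t) * x)
        (α*q*(q-1) * x + (q^2*β - t) * y)
        (α*q*(q-1) * x + q*(q-1)*(β+1) * y + (q^2*β⁻¹ - t) * z)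
        ((q-1)*(α*q+1) * x + (q-1)*(β*q+q-1) * y + q*(q-1)*β⁻¹ * z + (q^2*α⁻¹ - t) * w) := by
  rw [sub_mulVec, smul_mulVec, one_mulVec]
  simp only [heckeUQ, pairedVec, cons_mulVec, cons_dotProduct_cons, dotProduct_of_isEmpty,
    empty_mulVec, smul_cons, smul_empty, smul_eq_mul, cons_sub_cons, empty_sub_empty, vecCons_inj,
    and_true]
  refine ⟨?_, ?_, ?_, ?_, ?_, ?_, ?_, ?_⟩ <;> field_simp <;> ring

theorem heckeUQ_stabilization_mulVec {q α β : F} (hq : q ≠ 0) (hα : α ≠ 0) (hβ : β ≠ 0) :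
    (heckeUQ q α β - (q^2*α) • (1 : Matrix (Fin 8) (Fin 8) F)) *ᵥ
      ((heckeUQ q α β - (q^2*β) • (1 : Matrix (Fin 8) (Fin 8) F)) *ᵥ
        ((heckeUQ q α β - (q^2*β⁻¹) • (1 : Matrix (Fin 8) (Fin 8) F)) *ᵥ pairedVec 1 1 1 1)) =
      pairedVec 0 0 0 (q^3 * α⁻¹^3 * (α + 1) * (q - α) * (q - α*β) * (q - α*β⁻¹)) := by
  simp only [heckeUQ_sub_smul_one_mulVec_pairedVec hq]
  congr 1 <;> field_simp <;> ring

theorem heckeUP_sub_smul_one_mulVec_pairedVec_zero (q s α β γ w : F) :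
    (heckeUP q s α β γ - (q*s*γ*β) • (1 : Matrix (Fin 8) (Fin 8) F)) *ᵥ pairedVec 0 0 0 w =
      (γ * s * (q - β) * w) • ![0, 0, 0, 0, 0, 0, 1, 0] := by
  rw [sub_mulVec, smul_mulVec, one_mulVec]
  simp only [heckeUP, pairedVec, cons_mulVec, cons_dotProduct_cons, dotProduct_of_isEmpty,
    empty_mulVec, smul_cons, smul_empty, smul_eq_mul, cons_sub_cons, empty_sub_empty, vecCons_inj,
    and_true]
  refine ⟨?_, ?_, ?_, ?_, ?_, ?_, ?_, ?_⟩ <;> ring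

end

theorem hsieh_yamana_flat_stabilization_identity_general
    {F : Type*} [Field F] (q s α β γ : F)
    (hq : q ≠ 0) (hs0 : s ≠ 0) (hα : α ≠ 0) (hβ : β ≠ 0) (hγ : γ ≠ 0)
    (habg : α * β * γ ^ 2 = 1)
    (UQ UP : Matrix (Fin 8) (Fin 8) F)
    (hUQ : UQ = !![q^2*α, 0, 0, 0, 0, 0, 0, 0;
                   α*q*(q-1), q^2*β, 0, 0, 0, 0, 0, 0;
                   0, 0, q^2*α, 0, 0, 0, 0, 0;
                   0, q*(q-1)*(β+1), α*q*(q-1), q^2*β⁻¹, 0, 0, 0, 0;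
                   (α+1)*(q-1), (q-1)^2, α*(q-1)^2, (q^2-q)*β⁻¹, q^2*α⁻¹, β*q*(q-1), 0, 0;
                   0, 0, α*q*(q-1), 0, 0, q^2*β, 0, 0;
                   α*q⁻¹*(q-1)^2, β*(q-1), (q-1)*(α*(q-1+q⁻¹)+1), 0, 0, (q-1)^2*(β+1), q^2*α⁻¹, (q^2-q)*β⁻¹;
                   α*(q-1), 0, α*(q-1)^2, 0, 0, q*(q-1)*(β+1), 0, q^2*β⁻¹])
    (hUP : UP = !![q*s*γ⁻¹, 0, 0, 0, 0, 0, 0, 0;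
                   0, q*s*γ⁻¹, 0, 0, 0, 0, 0, 0;
                   s*(q-1)*γ⁻¹, 0, α*γ*q*s, 0, 0, 0, 0, 0;
                   0, s*(q-1)*γ⁻¹, 0, α*γ*q*s, 0, 0, 0, 0;
                   (q-1)*γ⁻¹*s⁻¹, (q-1)^2*γ⁻¹*s⁻¹, 0, α*γ*s*(q-1), β*γ*q*s, 0, 0, 0;
                   0, s*(q-1)*γ⁻¹, s*(q-1)*γ⁻¹*β⁻¹, 0, 0, β*γ*q*s, 0, 0;
                   (q-1)^2*γ⁻¹*q⁻¹*s⁻¹, (q^3-2*q^2+2*q-1)*γ⁻¹*q⁻¹*s⁻¹, α*γ*(q-1)*s⁻¹, α*γ*(q-1)^2*s⁻¹, β*γ*s*(q-1), 0, γ*q*s, 0;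
                   (q-1)*γ⁻¹*s⁻¹, (q-1)^2*γ⁻¹*s⁻¹, 0, α*γ*s*(q-1), 0, s*(q-1)*γ⁻¹*α⁻¹, 0, γ*q*s]) :
    (α^3 * γ⁻¹ * q⁻¹^7 * s⁻¹) •
        (((UP - (q*s*γ*β) • (1 : Matrix (Fin 8) (Fin 8) F)) *
          (UQ - (q^2*α) • (1 : Matrix (Fin 8) (Fin 8) F)) *
          (UQ - (q^2*β) • (1 : Matrix (Fin 8) (Fin 8) F)) *
          (UQ - (q^2*β⁻¹) • (1 : Matrix (Fin 8) (Fin 8) F))) *ᵥ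
            ![1, 1, 1, 1, 1, 1, 1, 1]) =
      ((α + 1) * (1 - α*q⁻¹) * (1 - β*q⁻¹) * (1 - γ^2*α^2*q⁻¹) * (1 - γ⁻¹^2*q⁻¹)) •
        ![0, 0, 0, 0, 0, 0, 1, 0] := by
  have hγ2 : γ ^ 2 = α⁻¹ * β⁻¹ := by
    field_simp
    linear_combination habg
  obtain rfl : UQ = heckeUQ q α β := hUQ
  obtain rfl : UP = heckeUP q s α β γ := hUP
  rw [show ![(1 : F), 1, 1, 1, 1, 1, 1, 1] = pairedVec 1 1 1 1 from rfl]
  simp only [← mulVec_mulVec]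
  rw [heckeUQ_stabilization_mulVec hq hα hβ, heckeUP_sub_smul_one_mulVec_pairedVec_zero, smul_smul]
  congr 1
  field_simp
  rw [hγ2]
  field_simp

/-- The identity `φ♭ = (α+1)·φ‡` of Proposition 7.6(3) of Hsieh–Yamana,
comparing the two stabilizations of the spherical vector. -/
theorem hsieh_yamana_flat_stabilization_identity
    {F : Type*} [Field F] (q s α β γ : F)
    (hq : q ≠ 0) (hs0 : s ≠ 0) (hα : α ≠ 0) (hβ : β ≠ 0) (hγ : γ ≠ 0)
    (hsq : s ^ 2 = q) (habg : α * β * γ ^ 2 = 1)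
    (UQ UP : Matrix (Fin 8) (Fin 8) F)
    (hUQ : UQ = !![q^2*α, 0, 0, 0, 0, 0, 0, 0;
                   α*q*(q-1), q^2*β, 0, 0, 0, 0, 0, 0;
                   0, 0, q^2*α, 0, 0, 0, 0, 0;
                   0, q*(q-1)*(β+1), α*q*(q-1), q^2*β⁻¹, 0, 0, 0, 0;
                   (α+1)*(q-1), (q-1)^2, α*(q-1)^2, (q^2-q)*β⁻¹, q^2*α⁻¹, β*q*(q-1), 0, 0;
                   0, 0, α*q*(q-1), 0, 0, q^2*β, 0, 0;
                   α*q⁻¹*(q-1)^2, β*(q-1), (q-1)*(α*(q-1+q⁻¹)+1), 0, 0, (q-1)^2*(β+1), q^2*α⁻¹, (q^2-q)*β⁻¹;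
                   α*(q-1), 0, α*(q-1)^2, 0, 0, q*(q-1)*(β+1), 0, q^2*β⁻¹])
    (hUP : UP = !![q*s*γ⁻¹, 0, 0, 0, 0, 0, 0, 0;
                   0, q*s*γ⁻¹, 0, 0, 0, 0, 0, 0;
                   s*(q-1)*γ⁻¹, 0, α*γ*q*s, 0, 0, 0, 0, 0;
                   0, s*(q-1)*γ⁻¹, 0, α*γ*q*s, 0, 0, 0, 0;
                   (q-1)*γ⁻¹*s⁻¹, (q-1)^2*γ⁻¹*s⁻¹, 0, α*γ*s*(q-1), β*γ*q*s, 0, 0, 0;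
                   0, s*(q-1)*γ⁻¹, s*(q-1)*γ⁻¹*β⁻¹, 0, 0, β*γ*q*s, 0, 0;
                   (q-1)^2*γ⁻¹*q⁻¹*s⁻¹, (q^3-2*q^2+2*q-1)*γ⁻¹*q⁻¹*s⁻¹, α*γ*(q-1)*s⁻¹, α*γ*(q-1)^2*s⁻¹, β*γ*s*(q-1), 0, γ*q*s, 0;
                   (q-1)*γ⁻¹*s⁻¹, (q-1)^2*γ⁻¹*s⁻¹, 0, α*γ*s*(q-1), 0, s*(q-1)*γ⁻¹*α⁻¹, 0, γ*q*s]) :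
    (α^3 * γ⁻¹ * q⁻¹^7 * s⁻¹) •
        (((UP - (q*s*γ*β) • (1 : Matrix (Fin 8) (Fin 8) F)) *
          (UQ - (q^2*α) • (1 : Matrix (Fin 8) (Fin 8) F)) *
          (UQ - (q^2*β) • (1 : Matrix (Fin 8) (Fin 8) F)) *
          (UQ - (q^2*β⁻¹) • (1 : Matrix (Fin 8) (Fin 8) F))) *ᵥ
            ![1, 1, 1, 1, 1, 1, 1, 1]) =
      ((α + 1) * (1 - α*q⁻¹) * (1 - β*q⁻¹) * (1 - γ^2*α^2*q⁻¹) * (1 - γ⁻¹^2*q⁻¹)) •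
        ![0, 0, 0, 0, 0, 0, 1, 0] :=
  hsieh_yamana_flat_stabilization_identity_general q s α β γ hq hs0 hα hβ hγ habg UQ UP hUQ hUP
end

section
/- The double series ∑_{i=1}^{∞} ∑_{j=0}^{∞} q^{i+j} · (1 − q⁻¹)^{min(1, i−1) + min(1, j)} · (T₀(i,j) − T₁(i,j)) converges absolutely, and its sum equals ε·γ⁻¹·q^{−1/2} · (1 + ε·γ⁻¹·q^{−3/2}) · (1 − γ⁻²·q⁻¹) · t₀ / ((1 − γ⁻¹·δ⁻¹·q^{−1/2}) · (1 − γ⁻¹·δ·q^{−1/2})). (This is the explicit evaluation of the Bessel period of the paramodular new vector, the computational content of Proposition 4.6 of Hsieh–Yamana.) -/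
set_option maxHeartbeats 1000000 in
/-- The explicit evaluation of the Bessel period of the paramodular new
vector; the computational content of Proposition 4.6 of Hsieh–Yamana. -/
theorem hsieh_yamana_paramodular_bessel_sum
    (q : ℝ) (hq : 1 < q) (ε : ℝ) (hε : ε = 1 ∨ ε = -1)
    (γ δ t₀ : ℂ) (hγ : ‖γ‖ = 1) (hδ : ‖δ‖ = 1)
    (t₁ : ℂ) (ht₁ : t₁ = -((1 + (ε : ℂ) * δ⁻¹) * ((q : ℂ) - 1)⁻¹) * t₀)
    (T0 T1 : ℕ → ℕ → ℂ)
    (hT0 : ∀ i j : ℕ, 1 ≤ i →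
      T0 i j = (ε : ℂ) * γ ^ (-((i : ℤ) + j)) *
        (Real.sqrt q : ℂ) ^ (-(3 * ((i : ℤ) + j))) * δ ^ ((j : ℤ) - i + 1) * t₀)
    (hT1a : ∀ i j : ℕ, 2 ≤ i → 1 ≤ j → T1 i j = T0 i j)
    (hT1b : ∀ i : ℕ, 2 ≤ i →
      T1 i 0 = γ ^ (-(i : ℤ)) * (Real.sqrt q : ℂ) ^ (-(3 * (i : ℤ))) *
        δ ^ (2 - (i : ℤ)) * t₁)
    (hT1c : T1 1 0 = γ ^ (-2 : ℤ) * (q : ℂ) ^ (-3 : ℤ) * t₀)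
    (hT1d : ∀ j : ℕ, 1 ≤ j →
      T1 1 j = (ε : ℂ) * γ ^ (-((j : ℤ) + 1)) *
        (Real.sqrt q : ℂ) ^ (-(3 * ((j : ℤ) + 1))) * δ ^ j * t₁)
    (g : ℕ × ℕ → ℂ)
    (hg : ∀ i j : ℕ, g (i, j) =
      (q : ℂ) ^ (i + 1 + j) * (1 - (q : ℂ)⁻¹) ^ (min 1 i + min 1 j) *
        (T0 (i + 1) j - T1 (i + 1) j)) :
    Summable (fun pr : ℕ × ℕ => ‖g pr‖) ∧
      ∑' pr : ℕ × ℕ, g pr =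
        (ε : ℂ) * γ⁻¹ * (Real.sqrt q : ℂ)⁻¹ *
          (1 + (ε : ℂ) * γ⁻¹ * (Real.sqrt q : ℂ) ^ (-3 : ℤ)) *
          (1 - γ⁻¹ ^ 2 * (q : ℂ)⁻¹) * t₀ /
          ((1 - γ⁻¹ * δ⁻¹ * (Real.sqrt q : ℂ)⁻¹) *
            (1 - γ⁻¹ * δ * (Real.sqrt q : ℂ)⁻¹)) := by
  have hq0 : (0:ℝ) < q := by linarith
  have hsq1 : 1 < Real.sqrt q := by
    nlinarith [Real.sq_sqrt hq0.le, Real.sqrt_nonneg q]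
  set s : ℂ := (Real.sqrt q : ℂ) with hsdef
  have hs2 : s ^ 2 = (q:ℂ) := by
    rw [hsdef]; norm_cast; exact Real.sq_sqrt hq0.le
  have hsnorm : ‖s‖ = Real.sqrt q := by
    rw [hsdef, Complex.norm_real, Real.norm_eq_abs, abs_of_pos (by linarith)]
  have hs0 : s ≠ 0 := by
    intro h; rw [h] at hsnorm; simp at hsnorm; linarith
  have hγ0 : γ ≠ 0 := by intro h; rw [h] at hγ; simp at hγ
  have hδ0 : δ ≠ 0 := by intro h; rw [h] at hδ; simp at hδ
  have hq0' : (q:ℂ) ≠ 0 := by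
    simp only [ne_eq, Complex.ofReal_eq_zero]; linarith
  have hqne1 : (q:ℂ) - 1 ≠ 0 := by
    intro h
    have h2 : ((q - 1 : ℝ) : ℂ) = 0 := by push_cast; rw [h]
    rw [Complex.ofReal_eq_zero] at h2; linarith
  set x : ℂ := γ⁻¹ * δ⁻¹ * s⁻¹ with hxdef
  set y : ℂ := γ⁻¹ * δ * s⁻¹ with hydef
  have hnx : ‖x‖ < 1 := by
    rw [hxdef]
    simp only [norm_mul, norm_inv, hγ, hδ, hsnorm, inv_one, one_mul]
    rw [inv_lt_one_iff₀]; right; exact hsq1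
  have hny : ‖y‖ < 1 := by
    rw [hydef]
    simp only [norm_mul, norm_inv, hγ, hδ, hsnorm, inv_one, one_mul, mul_one]
    rw [inv_lt_one_iff₀]; right; exact hsq1
  have hx1 : (1:ℂ) - x ≠ 0 := by
    rw [sub_ne_zero]; intro h; rw [← h] at hnx; simp at hnx
  have hy1 : (1:ℂ) - y ≠ 0 := by
    rw [sub_ne_zero]; intro h; rw [← h] at hny; simp at hny
  set A : ℕ → ℂ := fun i => if i = 0 then
      (q:ℂ) * ((ε:ℂ) * γ⁻¹ * (s⁻¹)^3 * t₀ - (γ⁻¹)^2 * ((q:ℂ)⁻¹)^3 * t₀)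
    else ((1 - (q:ℂ)⁻¹) * δ * ((ε:ℂ) * t₀ - δ * t₁)) * x^(i+1) with hAdef
  set B : ℕ → ℂ := fun j => if j = 0 then 0
    else ((1 - (q:ℂ)⁻¹) * (ε:ℂ) * (t₀ - t₁) * γ⁻¹ * s⁻¹) * y^j with hBdef
  clear_value s x y A B
  have hqq : ∀ n : ℕ, (q:ℂ)^n * ((q:ℂ)⁻¹)^n = 1 := fun n => by
    rw [← mul_pow, mul_inv_cancel₀ hq0', one_pow]
  have hδc : δ * δ⁻¹ = 1 := mul_inv_cancel₀ hδ0
  have hqs : ∀ n : ℕ, (q:ℂ)^n * (s⁻¹)^(3*n) = (s⁻¹)^n := by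
    intro n
    rw [pow_mul, ← mul_pow,
      show (q:ℂ) * (s⁻¹)^3 = s⁻¹ from by rw [← hs2]; field_simp]
  have hGform : ∀ i j : ℕ, g (i, j) =
      (if j = 0 then A i else 0) + (if i = 0 then B j else 0) := by
    intro i j
    match i, j with
    | 0, 0 =>
      simp only [hAdef, hBdef, if_pos rfl, add_zero]
      rw [hg 0 0, hT0 1 0 le_rfl, hT1c]
      norm_num [zpow_neg, zpow_ofNat, inv_pow]
    | i+1, 0 =>
      simp only [hAdef, hBdef, if_pos rfl, if_neg (Nat.succ_ne_zero i), add_zero]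
      rw [hg (i+1) 0, hT0 (i+1+1) 0 (by omega), hT1b (i+1+1) (by omega)]
      rw [show (-((((i+1+1:ℕ)):ℤ) + ((0:ℕ):ℤ))) = -(((i+1+1:ℕ)):ℤ) from by push_cast; ring,
          show (-(3 * ((((i+1+1:ℕ)):ℤ) + ((0:ℕ):ℤ)))) = -(((3*(i+1+1):ℕ)):ℤ) from by push_cast; ring,
          show (((0:ℕ):ℤ) - (((i+1+1:ℕ)):ℤ) + 1) = -(((i+1:ℕ)):ℤ) from by push_cast; ring,
          show (-(3 * (((i+1+1:ℕ)):ℤ))) = -(((3*(i+1+1):ℕ)):ℤ) from by push_cast; ring,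
          show ((2:ℤ) - (((i+1+1:ℕ)):ℤ)) = -(((i:ℕ)):ℤ) from by push_cast; ring,
          show (1 ⊓ (i+1) + 1 ⊓ 0) = 1 from by omega,
          if_pos trivial]
      simp only [zpow_neg, zpow_natCast, ← inv_pow]
      rw [hxdef]
      linear_combination ((1-(q:ℂ)⁻¹) * (γ⁻¹)^(i+1+1) *
          ((ε:ℂ)*(δ⁻¹)^(i+1)*t₀ - (δ⁻¹)^i*t₁)) * hqs (i+1+1) +
        ((1-(q:ℂ)⁻¹) * (γ⁻¹)^(i+1+1) * (s⁻¹)^(i+1+1) *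
          (-(ε:ℂ)*t₀*(δ⁻¹)^(i+1) + t₁*(δ⁻¹)^i*(δ*δ⁻¹+1))) * hδc
    | 0, j+1 =>
      simp only [hAdef, hBdef, if_pos rfl, if_neg (Nat.succ_ne_zero j), zero_add]
      rw [hg 0 (j+1), hT0 1 (j+1) le_rfl, hT1d (j+1) (by omega)]
      rw [show (-(((1:ℕ):ℤ) + (((j+1:ℕ)):ℤ))) = -(((j+1+1:ℕ)):ℤ) from by push_cast; ring,
          show (-(3 * (((1:ℕ):ℤ) + (((j+1:ℕ)):ℤ)))) = -(((3*(j+1+1):ℕ)):ℤ) from by push_cast; ring,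
          show ((((j+1:ℕ)):ℤ) - ((1:ℕ):ℤ) + 1) = (((j+1:ℕ)):ℤ) from by push_cast; ring,
          show (-((((j+1:ℕ)):ℤ) + 1)) = -(((j+1+1:ℕ)):ℤ) from by push_cast; ring,
          show (-(3 * ((((j+1:ℕ)):ℤ) + 1))) = -(((3*(j+1+1):ℕ)):ℤ) from by push_cast; ring,
          show (1 ⊓ 0 + 1 ⊓ (j+1)) = 1 from by omega,
          if_pos trivial]
      simp only [zpow_neg, zpow_natCast, ← inv_pow]
      rw [hydef]
      linear_combination ((1-(q:ℂ)⁻¹) * (γ⁻¹)^(j+1+1) *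
          (ε:ℂ) * δ^(j+1) * (t₀ - t₁)) * hqs (j+1+1)
    | i+1, j+1 =>
      simp only [if_neg (Nat.succ_ne_zero i), if_neg (Nat.succ_ne_zero j), add_zero]
      rw [hg (i+1) (j+1), hT1a (i+1+1) (j+1) (by omega) (by omega), sub_self, mul_zero]
  -- summability of the row/column profiles in norm
  have hsAn : Summable (fun i => ‖A i‖) := by
    have hfun : (fun i => ‖A i‖) = fun i =>
        (if i = 0 then ‖A 0‖ - ‖(1 - (q:ℂ)⁻¹) * δ * ((ε:ℂ) * t₀ - δ * t₁) * x‖ else 0) +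
        ‖(1 - (q:ℂ)⁻¹) * δ * ((ε:ℂ) * t₀ - δ * t₁) * x‖ * ‖x‖^i := by
      funext i
      cases i with
      | zero => simp
      | succ n =>
        simp only [hAdef, if_neg (Nat.succ_ne_zero n)]
        rw [show (1 - (q:ℂ)⁻¹) * δ * ((ε:ℂ) * t₀ - δ * t₁) * x^(n+1+1) =
            ((1 - (q:ℂ)⁻¹) * δ * ((ε:ℂ) * t₀ - δ * t₁) * x) * x^(n+1) from by ring,
          norm_mul _ (x^(n+1)), norm_pow, zero_add]
    rw [hfun]
    exact ((hasSum_ite_eq 0 _).summable).add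
      ((summable_geometric_of_lt_one (norm_nonneg x) hnx).mul_left _)
  have hsBn : Summable (fun j => ‖B j‖) := by
    have hfun : (fun j => ‖B j‖) = fun j =>
        (if j = 0 then -‖(1 - (q:ℂ)⁻¹) * (ε:ℂ) * (t₀ - t₁) * γ⁻¹ * s⁻¹‖ else 0) +
        ‖(1 - (q:ℂ)⁻¹) * (ε:ℂ) * (t₀ - t₁) * γ⁻¹ * s⁻¹‖ * ‖y‖^j := by
      funext j
      cases j with
      | zero => simp [hBdef]
      | succ n =>
        simp only [hBdef, if_neg (Nat.succ_ne_zero n)]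
        rw [norm_mul _ (y^(n+1)), norm_pow, zero_add]
    rw [hfun]
    exact ((hasSum_ite_eq 0 _).summable).add
      ((summable_geometric_of_lt_one (norm_nonneg y) hny).mul_left _)
  have hgsum : Summable g := by
    have h1 : Summable (fun pr : ℕ×ℕ => if pr.2 = 0 then A pr.1 else 0) := by
      have hinj : Function.Injective (fun k : ℕ => ((k, 0) : ℕ × ℕ)) := by
        intro a b hab; simpa using hab
      refine (Function.Injective.summable_iff hinj ?_).mp ?_
      · rintro ⟨a, b⟩ hpr
        have hb : b ≠ 0 := by
          intro hb; exact hpr ⟨a, by simp [hb]⟩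
        simp [hb]
      · exact (hsAn.of_norm).congr (by intro k; simp)
    have h2 : Summable (fun pr : ℕ×ℕ => if pr.1 = 0 then B pr.2 else 0) := by
      have hinj : Function.Injective (fun k : ℕ => ((0, k) : ℕ × ℕ)) := by
        intro a b hab; simpa using hab
      refine (Function.Injective.summable_iff hinj ?_).mp ?_
      · rintro ⟨a, b⟩ hpr
        have ha : a ≠ 0 := by
          intro ha; exact hpr ⟨b, by simp [ha]⟩
        simp [ha]
      · exact (hsBn.of_norm).congr (by intro k; simp)
    refine (h1.add h2).congr ?_
    rintro ⟨i, j⟩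
    rw [hGform i j]
  refine ⟨summable_norm_iff.mpr hgsum, ?_⟩
  -- the value of the column sum B
  have hBsum : HasSum B
      ((1 - (q:ℂ)⁻¹) * (ε:ℂ) * (t₀ - t₁) * γ⁻¹ * s⁻¹ * (1-y)⁻¹ -
        (1 - (q:ℂ)⁻¹) * (ε:ℂ) * (t₀ - t₁) * γ⁻¹ * s⁻¹) := by
    have h1 := (hasSum_geometric_of_norm_lt_one hny).mul_left
      ((1 - (q:ℂ)⁻¹) * (ε:ℂ) * (t₀ - t₁) * γ⁻¹ * s⁻¹)
    have h2 := hasSum_ite_eq (0:ℕ) ((1 - (q:ℂ)⁻¹) * (ε:ℂ) * (t₀ - t₁) * γ⁻¹ * s⁻¹)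
    have h3 := h1.sub h2
    have hfun : B = fun j => (1 - (q:ℂ)⁻¹) * (ε:ℂ) * (t₀ - t₁) * γ⁻¹ * s⁻¹ * y^j -
        (if j = 0 then (1 - (q:ℂ)⁻¹) * (ε:ℂ) * (t₀ - t₁) * γ⁻¹ * s⁻¹ else 0) := by
      funext j
      cases j with
      | zero => simp [hBdef]
      | succ n => simp [hBdef, Nat.succ_ne_zero]
    rw [hfun]
    exact h3
  have hrow0 : HasSum (fun j => g (0, j)) (A 0 +
      ((1 - (q:ℂ)⁻¹) * (ε:ℂ) * (t₀ - t₁) * γ⁻¹ * s⁻¹ * (1-y)⁻¹ -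
        (1 - (q:ℂ)⁻¹) * (ε:ℂ) * (t₀ - t₁) * γ⁻¹ * s⁻¹)) := by
    have h0 : (fun j => g (0, j)) = fun j => (if j = 0 then A 0 else 0) + B j := by
      funext j; rw [hGform 0 j]; simp
    rw [h0]
    exact (hasSum_ite_eq 0 (A 0)).add hBsum
  have hrowS : ∀ i : ℕ, HasSum (fun j => g (i+1, j)) (A (i+1)) := by
    intro i
    have h0 : (fun j => g (i+1, j)) = fun j => (if j = 0 then A (i+1) else 0) := by
      funext j; rw [hGform (i+1) j]; simp [Nat.succ_ne_zero]
    rw [h0]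
    exact hasSum_ite_eq 0 (A (i+1))
  set SB : ℂ := (1 - (q:ℂ)⁻¹) * (ε:ℂ) * (t₀ - t₁) * γ⁻¹ * s⁻¹ * (1-y)⁻¹ -
      (1 - (q:ℂ)⁻¹) * (ε:ℂ) * (t₀ - t₁) * γ⁻¹ * s⁻¹ with hSBdef
  set C1 : ℂ := (1 - (q:ℂ)⁻¹) * δ * ((ε:ℂ) * t₀ - δ * t₁) with hC1def
  clear_value SB C1
  have houter : HasSum (fun i : ℕ => if i = 0 then A 0 + SB else A i)
      (C1 * x * (1-x)⁻¹ + (A 0 + SB - C1 * x)) := by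
    have hfun : (fun i : ℕ => if i = 0 then A 0 + SB else A i) =
        fun i => C1 * x * x^i + (if i = 0 then A 0 + SB - C1 * x else 0) := by
      funext i
      cases i with
      | zero => simp
      | succ n =>
        simp only [if_neg (Nat.succ_ne_zero n), hAdef, add_zero]
        ring
    rw [hfun]
    exact ((hasSum_geometric_of_norm_lt_one hnx).mul_left (C1 * x)).add (hasSum_ite_eq 0 _)
  have hval : ∑' pr : ℕ × ℕ, g pr = C1 * x * (1-x)⁻¹ + (A 0 + SB - C1 * x) := by
    rw [Summable.tsum_prod hgsum]
    rw [show (fun i : ℕ => ∑' j, g (i, j)) = fun i : ℕ => if i = 0 then A 0 + SB else A i from ?_]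
    · exact houter.tsum_eq
    · funext i
      cases i with
      | zero => rw [hrow0.tsum_eq]; simp
      | succ n => rw [(hrowS n).tsum_eq]; simp [Nat.succ_ne_zero]
  rw [hval]
  have hA0 : A 0 = (q:ℂ) * ((ε:ℂ) * γ⁻¹ * (s⁻¹)^3 * t₀ - (γ⁻¹)^2 * ((q:ℂ)⁻¹)^3 * t₀) := by
    simp [hAdef]
  have key : ∀ (a b c xx yy : ℂ), (1 - xx) ≠ 0 → (1 - yy) ≠ 0 →
      b * xx * (1-xx)⁻¹ + (a + (c * (1-yy)⁻¹ - c) - b * xx) =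
      (a * (1-xx) * (1-yy) + b * xx^2 * (1-yy) + c * yy * (1-xx)) / ((1-xx)*(1-yy)) := by
    intro a b c xx yy hxx hyy
    field_simp
    ring
  rw [hSBdef, key (A 0) C1 ((1 - (q:ℂ)⁻¹) * (ε:ℂ) * (t₀ - t₁) * γ⁻¹ * s⁻¹) x y hx1 hy1,
    show s ^ (-3:ℤ) = (s⁻¹)^3 from by rw [zpow_neg, zpow_ofNat, inv_pow]]
  refine congrArg (fun z => z / ((1 - x) * (1 - y))) ?_
  have hqc : (q:ℂ) * (q:ℂ)⁻¹ = 1 := mul_inv_cancel₀ hq0'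
  have hw : ((q:ℂ)-1) * ((q:ℂ)-1)⁻¹ = 1 := mul_inv_cancel₀ hqne1
  have hqinv : (q:ℂ)⁻¹ = (s⁻¹)^2 := by rw [← hs2, ← inv_pow]
  have hsr : s * s⁻¹ = 1 := mul_inv_cancel₀ hs0
  have hε2 : ((ε:ℝ):ℂ)^2 = 1 := by rcases hε with rfl | rfl <;> norm_num
  have hC1' : C1 = (1 - (q:ℂ)⁻¹) * δ * (ε:ℂ) * t₀ + δ^2 * (1 + (ε:ℂ)*δ⁻¹) * (q:ℂ)⁻¹ * t₀ := by
    rw [hC1def, ht₁]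
    linear_combination (δ^2*(1+(ε:ℂ)*δ⁻¹)*t₀) * (-(((q:ℂ)-1)⁻¹)) * hqc +
      (δ^2*(1+(ε:ℂ)*δ⁻¹)*t₀) * (q:ℂ)⁻¹ * hw
  have hC2' : (1 - (q:ℂ)⁻¹) * (ε:ℂ) * (t₀ - t₁) * γ⁻¹ * s⁻¹ =
      (ε:ℂ) * γ⁻¹ * s⁻¹ * ((1 - (q:ℂ)⁻¹) * t₀ + (1 + (ε:ℂ)*δ⁻¹) * (q:ℂ)⁻¹ * t₀) := by
    rw [ht₁]
    linear_combination ((ε:ℂ)*γ⁻¹*s⁻¹*(1+(ε:ℂ)*δ⁻¹)*t₀) * (-(((q:ℂ)-1)⁻¹)) * hqc +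
      ((ε:ℂ)*γ⁻¹*s⁻¹*(1+(ε:ℂ)*δ⁻¹)*t₀) * (q:ℂ)⁻¹ * hw
  have hA0'' : A 0 = (ε:ℂ)*γ⁻¹*s⁻¹*t₀ - γ⁻¹^2*(s⁻¹)^4*t₀ := by
    rw [hA0, hqinv, ← hs2]
    linear_combination (s*s⁻¹+1) * ((ε:ℂ)*γ⁻¹*s⁻¹*t₀ - γ⁻¹^2*(s⁻¹)^4*t₀) * hsr
  rw [hA0'', hC1', hC2', hxdef, hydef, hqinv]
  linear_combination
    (γ⁻¹^2*(s⁻¹)^2*δ⁻¹*t₀*(ε:ℂ) + γ⁻¹^2*(s⁻¹)^4*t₀ + γ⁻¹^2*(s⁻¹)^4*t₀*(ε:ℂ)^2 +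
      γ⁻¹^2*(s⁻¹)^4*δ*δ⁻¹*t₀ + γ⁻¹^2*(s⁻¹)^4*δ*δ⁻¹^2*t₀*(ε:ℂ) -
      γ⁻¹^3*(s⁻¹)^3*t₀*(ε:ℂ) - γ⁻¹^3*(s⁻¹)^3*δ*δ⁻¹*t₀*(ε:ℂ) -
      γ⁻¹^3*(s⁻¹)^5*δ⁻¹*t₀*(ε:ℂ)^2 - γ⁻¹^3*(s⁻¹)^5*δ*t₀ -
      γ⁻¹^3*(s⁻¹)^5*δ^2*δ⁻¹*t₀ - γ⁻¹^3*(s⁻¹)^5*δ^2*δ⁻¹^2*t₀*(ε:ℂ) -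
      γ⁻¹^4*(s⁻¹)^6*t₀) * hδc +
    (-(γ⁻¹^3*(s⁻¹)^5*δ⁻¹*t₀) + γ⁻¹^4*(s⁻¹)^6*t₀) * hε2
end

section
/- Let z = [[x, y], [y, w]] ∈ Sym₂(ℚ_p) and assume: 𝐯(y) ≤ 1; if 𝐯(y) = 0 then x ∉ ℤ_p and w ∉ pℤ_p; if 𝐯(y) = 1 and 𝐯(w) = 0 then (𝐯(x) ≥ 3 implies w ∈ ℤ_pˣ) and (𝐯(x) ≤ 2 implies w = 0); if 𝐯(y) = 1 and 𝐯(x) ≤ 1 then (𝐯(w) ≥ 2 implies 𝐯(x) = 1) and (𝐯(w) ≤ 1 implies x = 0). Then z is invertible, and w_s·n(z) belongs to the product of sets N₂ · Z₂ · d(det z) · t(z·J₁) · K(p). (This is Lemma 4.2 of Hsieh–Yamana.) -/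
open Matrix

/-- `J = [[0, 1₂], [−1₂, 0]]` defining `GSp₄`. -/
noncomputable def GSp4J (p : ℕ) [Fact p.Prime] : Matrix (Fin 4) (Fin 4) ℚ_[p] :=
  !![0, 0, 1, 0;
     0, 0, 0, 1;
     -1, 0, 0, 0;
     0, -1, 0, 0]

/-- `n(Z) = [[1₂, Z], [0, 1₂]]`. -/
noncomputable def nMat (p : ℕ) [Fact p.Prime] (Z : Matrix (Fin 2) (Fin 2) ℚ_[p]) :
    Matrix (Fin 4) (Fin 4) ℚ_[p] :=
  !![1, 0, Z 0 0, Z 0 1;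
     0, 1, Z 1 0, Z 1 1;
     0, 0, 1, 0;
     0, 0, 0, 1]

/-- `t(A) = [[A, 0], [0, (det A)·(Aᵀ)⁻¹]]`. -/
noncomputable def tMat (p : ℕ) [Fact p.Prime] (A : Matrix (Fin 2) (Fin 2) ℚ_[p]) :
    Matrix (Fin 4) (Fin 4) ℚ_[p] :=
  !![A 0 0, A 0 1, 0, 0;
     A 1 0, A 1 1, 0, 0;
     0, 0, (A.det • (Aᵀ)⁻¹) 0 0, (A.det • (Aᵀ)⁻¹) 0 1;
     0, 0, (A.det • (Aᵀ)⁻¹) 1 0, (A.det • (Aᵀ)⁻¹) 1 1]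

/-- `d(λ) = diag(1, 1, λ, λ)`. -/
noncomputable def dMat (p : ℕ) [Fact p.Prime] (l : ℚ_[p]) : Matrix (Fin 4) (Fin 4) ℚ_[p] :=
  !![1, 0, 0, 0;
     0, 1, 0, 0;
     0, 0, l, 0;
     0, 0, 0, l]

/-- `J₁ = [[0, 1], [−1, 0]]`. -/
noncomputable def J1Mat (p : ℕ) [Fact p.Prime] : Matrix (Fin 2) (Fin 2) ℚ_[p] :=
  !![0, 1; -1, 0]

/-- The Weyl element `w_s` with rows `(0,0,0,1), (0,0,−1,0), (0,−1,0,0), (1,0,0,0)`. -/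
noncomputable def wsMat (p : ℕ) [Fact p.Prime] : Matrix (Fin 4) (Fin 4) ℚ_[p] :=
  !![0, 0, 0, 1;
     0, 0, -1, 0;
     0, -1, 0, 0;
     1, 0, 0, 0]

/-- The paramodular group `K(p)` of level `p`: elements of `GSp₄(ℚ_p)` with
similitude factor in `ℤ_pˣ`, entry (1,3) in `p⁻¹ℤ_p`, entries (2,1), (3,1),
(3,2), (3,4), (4,1) in `pℤ_p`, and all remaining entries in `ℤ_p`
(matrix positions written 1-based). -/
def InParamodular (p : ℕ) [Fact p.Prime] (k : Matrix (Fin 4) (Fin 4) ℚ_[p]) : Prop :=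
  (∃ l : ℚ_[p], ‖l‖ = 1 ∧ k * GSp4J p * kᵀ = l • GSp4J p) ∧
    ‖k 0 2‖ ≤ p ∧
    ‖k 1 0‖ < 1 ∧ ‖k 2 0‖ < 1 ∧ ‖k 2 1‖ < 1 ∧ ‖k 2 3‖ < 1 ∧ ‖k 3 0‖ < 1 ∧
    ‖k 0 0‖ ≤ 1 ∧ ‖k 0 1‖ ≤ 1 ∧ ‖k 0 3‖ ≤ 1 ∧ ‖k 1 1‖ ≤ 1 ∧ ‖k 1 2‖ ≤ 1 ∧
    ‖k 1 3‖ ≤ 1 ∧ ‖k 2 2‖ ≤ 1 ∧ ‖k 3 1‖ ≤ 1 ∧ ‖k 3 2‖ ≤ 1 ∧ ‖k 3 3‖ ≤ 1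

/-- `𝐯(t) = max(0, −v_p(t))` for `t ≠ 0`, and `𝐯(0) = 0`. -/
noncomputable def vLevel (p : ℕ) [Fact p.Prime] (t : ℚ_[p]) : ℤ :=
  open scoped Classical in
  if t = 0 then 0 else max 0 (-t.valuation)

/-!
The element of `K(p)` is `k = n(z⁻¹)ᵀ`. For every invertible symmetric `z`,
`w_s n(z) = n(-z / det z) · (-(det z)⁻¹) · d(det z) · t(z J₁) · k`, and since
`z⁻¹ = (det z)⁻¹ [[w, -y], [-y, x]]`, `k` is paramodular as soon as
`‖y‖, ‖w‖ < ‖det z‖` and `‖x‖ ≤ ‖det z‖`. The hypotheses give these bounds case by case: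
either `‖x‖ > 1`, `‖w‖ ≥ 1` and `‖y‖² < ‖x‖ ‖w‖`, so that `‖det z‖ = ‖x‖ ‖w‖` by the
ultrametric inequality, or `x w = 0` and `‖det z‖ = ‖y‖² = p²`.
-/

section NormDet

variable {K : Type*} [NormedField K] {x y w : K}

theorem norm_lt_norm_det_of_mul_eq_zero (hxw : x * w = 0) (hy : 1 < ‖y‖)
    (hx : ‖x‖ ≤ ‖y‖ ^ 2) (hw : ‖w‖ < ‖y‖ ^ 2) :
    ‖y‖ < ‖x * w - y * y‖ ∧ ‖w‖ < ‖x * w - y * y‖ ∧ ‖x‖ ≤ ‖x * w - y * y‖ := by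
  rw [hxw, zero_sub, norm_neg, norm_mul, ← sq]
  exact ⟨by nlinarith, hw, hx⟩

variable [IsUltrametricDist K]

theorem norm_mul_sub_mul_self_of_sq_lt (h : ‖y‖ ^ 2 < ‖x‖ * ‖w‖) :
    ‖x * w - y * y‖ = ‖x‖ * ‖w‖ := by
  have hlt : ‖-(y * y)‖ < ‖x * w‖ := by rwa [norm_neg, norm_mul, norm_mul, ← sq]
  rw [sub_eq_add_neg, IsUltrametricDist.norm_add_eq_max_of_norm_ne_norm hlt.ne',
    max_eq_left hlt.le, norm_mul]

theorem norm_lt_norm_det_of_one_lt (hx : 1 < ‖x‖) (hw : 1 ≤ ‖w‖)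
    (h : ‖y‖ ^ 2 < ‖x‖ * ‖w‖) :
    ‖y‖ < ‖x * w - y * y‖ ∧ ‖w‖ < ‖x * w - y * y‖ ∧ ‖x‖ ≤ ‖x * w - y * y‖ := by
  rw [norm_mul_sub_mul_self_of_sq_lt h]
  refine ⟨?_, by nlinarith, by nlinarith⟩
  rcases le_or_gt ‖y‖ 1 with hy | hy <;> nlinarith

end NormDet

section vLevel

variable {p : ℕ} [Fact p.Prime]

theorem vLevel_nonneg (t : ℚ_[p]) : 0 ≤ vLevel p t := by
  unfold vLevel
  split_ifs
  exacts [le_rfl, le_max_left _ _]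

theorem vLevel_le_iff (t : ℚ_[p]) (n : ℕ) : vLevel p t ≤ n ↔ ‖t‖ ≤ (p : ℝ) ^ n := by
  have hp : (1 : ℝ) < p := mod_cast (Fact.out : p.Prime).one_lt
  unfold vLevel
  split_ifs with ht
  · simp [ht]
  · rw [Padic.norm_eq_zpow_neg_valuation ht, ← zpow_natCast, zpow_le_zpow_iff_right₀ hp,
      max_le_iff]
    omega

theorem le_vLevel_iff (t : ℚ_[p]) {n : ℕ} (hn : 0 < n) :
    n ≤ vLevel p t ↔ (p : ℝ) ^ n ≤ ‖t‖ := by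
  have hp : (1 : ℝ) < p := mod_cast (Fact.out : p.Prime).one_lt
  unfold vLevel
  split_ifs with ht
  · simp only [ht, norm_zero]
    exact iff_of_false (by omega) (not_le.2 (by positivity))
  · rw [Padic.norm_eq_zpow_neg_valuation ht, ← zpow_natCast, zpow_le_zpow_iff_right₀ hp,
      le_max_iff]
    omega

theorem norm_eq_of_vLevel_eq {t : ℚ_[p]} {n : ℕ} (hn : 0 < n) (ht : vLevel p t = n) :
    ‖t‖ = (p : ℝ) ^ n :=
  le_antisymm ((vLevel_le_iff t n).1 ht.le) ((le_vLevel_iff t hn).1 ht.ge)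

theorem norm_lt_norm_det_of_vLevel_eq_one (x y w : ℚ_[p]) (hy : vLevel p y = 1)
    (h1 : vLevel p w = 0 → (3 ≤ vLevel p x → ‖w‖ = 1) ∧ (vLevel p x ≤ 2 → w = 0))
    (h2 : vLevel p x ≤ 1 → (2 ≤ vLevel p w → vLevel p x = 1) ∧ (vLevel p w ≤ 1 → x = 0)) :
    ‖y‖ < ‖x * w - y * y‖ ∧ ‖w‖ < ‖x * w - y * y‖ ∧ ‖x‖ ≤ ‖x * w - y * y‖ := by
  have hp : (1 : ℝ) < p := mod_cast (Fact.out : p.Prime).one_lt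
  have hp2 : (p : ℝ) < p ^ 2 := by nlinarith
  have hp3 : (p : ℝ) ^ 2 < p ^ 3 := pow_lt_pow_right₀ hp (by norm_num)
  have hy' : ‖y‖ = p := by simpa using norm_eq_of_vLevel_eq one_pos (by exact_mod_cast hy)
  rcases eq_or_lt_of_le (vLevel_nonneg w) with hw | hw
  · obtain ⟨hx_large, hx_small⟩ := h1 hw.symm
    rcases le_or_gt (vLevel p x) 2 with hx | hx
    · refine norm_lt_norm_det_of_mul_eq_zero (by simp [hx_small hx]) (hy' ▸ hp) ?_ ?_
      · simpa [hy'] using (vLevel_le_iff x 2).1 (mod_cast hx)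
      · simp only [hx_small hx, norm_zero, hy']; positivity
    · have hw' := hx_large (by omega)
      have hx' := (le_vLevel_iff x (n := 3) (by norm_num)).1 (mod_cast hx)
      refine norm_lt_norm_det_of_one_lt (by nlinarith) hw'.ge ?_
      rw [hy', hw']; nlinarith
  have hw' : (p : ℝ) ≤ ‖w‖ := by simpa using (le_vLevel_iff w one_pos).1 (mod_cast hw)
  rcases le_or_gt (vLevel p x) 1 with hx | hx
  · obtain ⟨hw_large, hw_small⟩ := h2 hx
    rcases le_or_gt (vLevel p w) 1 with hw1 | hw1
    · refine norm_lt_norm_det_of_mul_eq_zero (by simp [hw_small hw1]) (hy' ▸ hp) ?_ ?_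
      · simp [hw_small hw1]
      · have := (vLevel_le_iff w 1).1 (mod_cast hw1)
        rw [hy']; linarith [pow_one (p : ℝ)]
    · have hx' : ‖x‖ = p := by
        simpa using norm_eq_of_vLevel_eq one_pos (by exact_mod_cast hw_large (by omega))
      have hw2 := (le_vLevel_iff w (n := 2) (by norm_num)).1 (mod_cast hw1)
      refine norm_lt_norm_det_of_one_lt (hx' ▸ hp) (by linarith) ?_
      rw [hy', hx']; nlinarith
  · have hx' := (le_vLevel_iff x (n := 2) (by norm_num)).1 (mod_cast hx)
    refine norm_lt_norm_det_of_one_lt (by linarith) (by linarith) ?_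
    rw [hy']; nlinarith

theorem norm_lt_norm_det (x y w : ℚ_[p]) (hy : vLevel p y ≤ 1)
    (h0 : vLevel p y = 0 → ¬ ‖x‖ ≤ 1 ∧ ¬ ‖w‖ < 1)
    (h1 : vLevel p y = 1 → vLevel p w = 0 →
      (3 ≤ vLevel p x → ‖w‖ = 1) ∧ (vLevel p x ≤ 2 → w = 0))
    (h2 : vLevel p y = 1 → vLevel p x ≤ 1 →
      (2 ≤ vLevel p w → vLevel p x = 1) ∧ (vLevel p w ≤ 1 → x = 0)) :
    ‖y‖ < ‖x * w - y * y‖ ∧ ‖w‖ < ‖x * w - y * y‖ ∧ ‖x‖ ≤ ‖x * w - y * y‖ := by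
  rcases eq_or_lt_of_le (vLevel_nonneg y) with hy0 | hy0
  · obtain ⟨hx, hw⟩ := h0 hy0.symm
    have hy' : ‖y‖ ≤ 1 := by simpa using (vLevel_le_iff y 0).1 (by omega)
    exact norm_lt_norm_det_of_one_lt (not_le.1 hx) (not_lt.1 hw) (by nlinarith [norm_nonneg y])
  · have hy1 : vLevel p y = 1 := by omega
    exact norm_lt_norm_det_of_vLevel_eq_one x y w hy1 (h1 hy1) (h2 hy1)

end vLevel

namespace Matrix

theorem isSymm_of_fin_two {α : Type*} (a b c : α) : (!![a, b; b, c]).IsSymm :=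
  IsSymm.ext fun i j => by fin_cases i <;> fin_cases j <;> rfl

theorem IsSymm.exists_eq_of_fin_two {α : Type*} {z : Matrix (Fin 2) (Fin 2) α}
    (hz : z.IsSymm) : ∃ a b c, z = !![a, b; b, c] :=
  ⟨z 0 0, z 0 1, z 1 1, (eta_fin_two z).trans (by rw [hz.apply 0 1])⟩

theorem det_smul_inv_transpose_fin_two {K : Type*} [Field K] {A : Matrix (Fin 2) (Fin 2) K}
    (hA : A.det ≠ 0) : A.det • (Aᵀ)⁻¹ = !![A 1 1, -A 1 0; -A 0 1, A 0 0] := by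
  rw [inv_def, det_transpose, Ring.inverse_eq_inv', smul_smul, mul_inv_cancel₀ hA, one_smul,
    adjugate_fin_two]
  rfl

end Matrix

section GSp4

variable {p : ℕ} [Fact p.Prime]

theorem wsMat_mul_nMat {z : Matrix (Fin 2) (Fin 2) ℚ_[p]} (hz : z.IsSymm) (hdet : z.det ≠ 0) :
    wsMat p * nMat p z =
      nMat p (-z.det⁻¹ • z) * ((-z.det⁻¹) • 1) * dMat p z.det * tMat p (z * J1Mat p) *
        (nMat p z⁻¹)ᵀ := by
  have hdetJ : (z * J1Mat p).det = z.det := by simp [J1Mat, det_fin_two]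
  rw [tMat, det_smul_inv_transpose_fin_two (hdetJ ▸ hdet), inv_def, Ring.inverse_eq_inv',
    adjugate_fin_two]
  obtain ⟨a, b, c, rfl⟩ := hz.exists_eq_of_fin_two
  rw [det_fin_two_of] at hdet ⊢
  -- an atomic denominator lets `field_simp` clear it in every entry
  generalize hD : a * c - b * b = D at hdet ⊢
  ext i j
  fin_cases i <;> fin_cases j <;>
    simp [wsMat, nMat, dMat, J1Mat, mul_apply, Fin.sum_univ_four, Fin.sum_univ_two] <;>
    field_simp <;> rw [← hD] <;> ring

theorem inParamodular_transpose_nMat {S : Matrix (Fin 2) (Fin 2) ℚ_[p]} (hS : S.IsSymm)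
    (h00 : ‖S 0 0‖ < 1) (h01 : ‖S 0 1‖ < 1) (h11 : ‖S 1 1‖ ≤ 1) :
    InParamodular p (nMat p S)ᵀ := by
  have h10 : S 1 0 = S 0 1 := hS.apply 0 1
  refine ⟨⟨1, norm_one, ?_⟩, ?_⟩
  · ext i j
    fin_cases i <;> fin_cases j <;>
      simp [GSp4J, nMat, mul_apply, Fin.sum_univ_four, h10]
  · simp [nMat, h00, h01, h10, h11]

theorem inParamodular_transpose_nMat_inv {x y w : ℚ_[p]}
    (h : ‖y‖ < ‖x * w - y * y‖ ∧ ‖w‖ < ‖x * w - y * y‖ ∧ ‖x‖ ≤ ‖x * w - y * y‖) :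
    InParamodular p (nMat p !![x, y; y, w]⁻¹)ᵀ := by
  obtain ⟨hy, hw, hx⟩ := h
  have hD : 0 < ‖x * w - y * y‖ := (norm_nonneg y).trans_lt hy
  have hS : (!![x, y; y, w]⁻¹).IsSymm :=
    (isSymm_of_fin_two x y w).inv
  refine inParamodular_transpose_nMat hS ?_ ?_ ?_ <;>
    simpa [inv_def, adjugate_fin_two_of, norm_mul, norm_inv, inv_mul_lt_iff₀ hD,
      inv_mul_le_iff₀ hD]

end GSp4

/-- Lemma 4.2 of Hsieh–Yamana: under the stated congruence conditions on the
entries of `z = [[x, y], [y, w]]`, the matrix `z` is invertible and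
`w_s · n(z) ∈ N₂ · Z₂ · d(det z) · t(z·J₁) · K(p)`. -/
theorem hsieh_yamana_lemma_4_2
    (p : ℕ) [Fact p.Prime] (x y w : ℚ_[p])
    (z : Matrix (Fin 2) (Fin 2) ℚ_[p]) (hz : z = !![x, y; y, w])
    (hy : vLevel p y ≤ 1)
    (h0 : vLevel p y = 0 → ¬ ‖x‖ ≤ 1 ∧ ¬ ‖w‖ < 1)
    (h1 : vLevel p y = 1 → vLevel p w = 0 →
      (3 ≤ vLevel p x → ‖w‖ = 1) ∧ (vLevel p x ≤ 2 → w = 0))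
    (h2 : vLevel p y = 1 → vLevel p x ≤ 1 →
      (2 ≤ vLevel p w → vLevel p x = 1) ∧ (vLevel p w ≤ 1 → x = 0)) :
    IsUnit z ∧
      ∃ u : Matrix (Fin 2) (Fin 2) ℚ_[p], uᵀ = u ∧
        ∃ l : ℚ_[p], l ≠ 0 ∧
          ∃ k : Matrix (Fin 4) (Fin 4) ℚ_[p], InParamodular p k ∧
            wsMat p * nMat p z =
              nMat p u * (l • (1 : Matrix (Fin 4) (Fin 4) ℚ_[p])) *
                dMat p z.det * tMat p (z * J1Mat p) * k := by
  have hbounds := norm_lt_norm_det x y w hy h0 h1 h2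
  have hsymm : z.IsSymm := hz ▸ isSymm_of_fin_two x y w
  have hdet : z.det ≠ 0 := by
    rw [hz, det_fin_two_of, ← norm_pos_iff]
    exact (norm_nonneg y).trans_lt hbounds.1
  exact ⟨(isUnit_iff_isUnit_det z).2 hdet.isUnit, _, (hsymm.smul _).eq, _,
    neg_ne_zero.2 (inv_ne_zero hdet), _, hz ▸ inParamodular_transpose_nMat_inv hbounds,
    wsMat_mul_nMat hsymm hdet⟩
end

section
/- For a matrix A ∈ M₂(F), the following are equivalent: (i) A is invertible and Aᵀ·S·A = (det A)·S; (ii) there exist x, y ∈ F with x² − (d₀/4)·y² ≠ 0 such that A = M(x, y). (This is the explicit description, asserted in §3.1 of Hsieh–Yamana, of the similitude group T_S = {A ∈ GL₂(F) : AᵀSA = (det A)·S} attached to a nondegenerate binary quadratic form; it identifies T_S with the unit group of the quadratic algebra F(√d₀).) -/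
open Matrix

private lemma hy_transpose_fin_two {α : Type*} (a b c d : α) :
    (!![a, b; c, d])ᵀ = !![a, c; b, d] := by
  ext i j; fin_cases i <;> fin_cases j <;> rfl

private lemma hy_smul_fin_two {α : Type*} [Mul α] (k a b c d : α) :
    k • !![a, b; c, d] = !![k * a, k * b; k * c, k * d] := by
  ext i j; fin_cases i <;> fin_cases j <;> simp [Matrix.smul_apply]

/-- The explicit description (§3.1 of Hsieh–Yamana) of the similitude group
`T_S = {A ∈ GL₂(F) : AᵀSA = (det A)·S}` attached to a nondegenerate binary
quadratic form: it consists exactly of the matrices `M(x, y)` with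
`x² − (d₀/4)·y² ≠ 0`. -/
theorem hsieh_yamana_torus_description
    {F : Type*} [Field F] (h2 : (2 : F) ≠ 0) (a₀ b₀ c₀ : F)
    (S : Matrix (Fin 2) (Fin 2) F) (hS : S = !![a₀, b₀ / 2; b₀ / 2, c₀])
    (hdet : S.det ≠ 0)
    (d₀ : F) (hd₀ : d₀ = b₀ ^ 2 - 4 * a₀ * c₀)
    (M : F → F → Matrix (Fin 2) (Fin 2) F)
    (hM : ∀ x y : F,
      M x y = !![x - y * b₀ / 2, -y * c₀; y * a₀, x + y * b₀ / 2])
    (A : Matrix (Fin 2) (Fin 2) F) :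
    (IsUnit A ∧ Aᵀ * S * A = A.det • S) ↔
      ∃ x y : F, x ^ 2 - (d₀ / 4) * y ^ 2 ≠ 0 ∧ A = M x y := by
  have hSdet : a₀ * c₀ - b₀ / 2 * (b₀ / 2) ≠ 0 := by
    rw [hS] at hdet
    simpa [Matrix.det_fin_two_of] using hdet
  have h4 : (4 : F) ≠ 0 := by
    have h42 : (4 : F) = 2 * 2 := by norm_num
    rw [h42]; exact mul_ne_zero h2 h2
  constructor
  · rintro ⟨hU, hEq⟩
    have hdA : A.det ≠ 0 := ((Matrix.isUnit_iff_isUnit_det A).mp hU).ne_zero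
    have h1 : Aᵀ * S = S * adjugate A := by
      have h2' : A.det • (Aᵀ * S) = A.det • (S * adjugate A) := by
        calc A.det • (Aᵀ * S) = Aᵀ * S * (A.det • 1) := by
              rw [Matrix.mul_smul, Matrix.mul_one]
          _ = Aᵀ * S * (A * adjugate A) := by rw [Matrix.mul_adjugate]
          _ = (Aᵀ * S * A) * adjugate A := by
              rw [Matrix.mul_assoc (Aᵀ * S) A (adjugate A)]
          _ = (A.det • S) * adjugate A := by rw [hEq]
          _ = A.det • (S * adjugate A) := by rw [Matrix.smul_mul]
      exact smul_right_injective _ hdA h2'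
    have e11 := congrFun (congrFun h1 0) 0
    have e12 := congrFun (congrFun h1 0) 1
    have e22 := congrFun (congrFun h1 1) 1
    simp [hS, Matrix.mul_apply, Fin.sum_univ_two, Matrix.adjugate_fin_two]
      at e11 e12 e22
    field_simp at e11 e12 e22
    have cancel2 : ∀ u v : F, 2 * u = 2 * v → u = v := fun u v h =>
      mul_left_cancel₀ h2 h
    -- e11 : A 0 0 * a₀ + A 1 0 * (b₀ / 2) = a₀ * A 1 1 + -(b₀ / 2 * A 1 0)
    -- e12 : A 0 0 * (b₀ / 2) + A 1 0 * c₀ = -(a₀ * A 0 1) + b₀ / 2 * A 0 0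
    -- e22 : A 0 1 * (b₀ / 2) + A 1 1 * c₀ = -(b₀ / 2 * A 0 1) + c₀ * A 0 0
    have he1 : a₀ * (A 1 1 - A 0 0) = b₀ * A 1 0 :=
      cancel2 _ _ (by linear_combination -e11)
    have he2 : a₀ * A 0 1 + c₀ * A 1 0 = 0 :=
      cancel2 _ _ (by linear_combination e12)
    have he3 : c₀ * (A 1 1 - A 0 0) = -(b₀ * A 0 1) :=
      cancel2 _ _ (by linear_combination e22)
    obtain ⟨y, hb, hc, hda⟩ :
        ∃ y : F, A 0 1 = -y * c₀ ∧ A 1 0 = y * a₀ ∧ A 1 1 - A 0 0 = y * b₀ := by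
      by_cases ha₀ : a₀ = 0
      · have hb₀ : b₀ ≠ 0 := by
          intro hb₀
          apply hSdet
          rw [ha₀, hb₀]; ring
        refine ⟨(A 1 1 - A 0 0) / b₀, ?_, ?_, ?_⟩
        · field_simp
          linear_combination he3
        · have h0 : b₀ * A 1 0 = 0 := by rw [← he1, ha₀]; ring
          have := (mul_eq_zero.mp h0).resolve_left hb₀
          rw [this, ha₀]; ring
        · field_simp
      · refine ⟨A 1 0 / a₀, ?_, ?_, ?_⟩
        · field_simp
          linear_combination he2
        · field_simp
        · field_simp
          linear_combination he1
    set x := (A 0 0 + A 1 1) / 2 with hx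
    have hx2 : x * 2 = A 0 0 + A 1 1 := by
      rw [hx]; field_simp
    have g00 : A 0 0 = x - y * b₀ / 2 := by
      field_simp
      linear_combination -hx2 - hda
    have g11 : A 1 1 = x + y * b₀ / 2 := by
      field_simp
      linear_combination -hx2 + hda
    have hA : A = M x y := by
      rw [hM, Matrix.eta_fin_two A, g00, hb, hc, g11]
    refine ⟨x, y, ?_, hA⟩
    have hdetA : A.det = x ^ 2 - d₀ / 4 * y ^ 2 := by
      rw [hA, hM, Matrix.det_fin_two_of, hd₀]
      field_simp [h4]
      ring
    rw [← hdetA]; exact hdA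
  · rintro ⟨x, y, hxy, rfl⟩
    have hdetM : (M x y).det = x ^ 2 - d₀ / 4 * y ^ 2 := by
      rw [hM, Matrix.det_fin_two_of, hd₀]
      field_simp [h4]
      ring
    constructor
    · rw [Matrix.isUnit_iff_isUnit_det, hdetM]
      exact hxy.isUnit
    · rw [hdetM, hM, hS, hy_transpose_fin_two, Matrix.mul_fin_two,
        Matrix.mul_fin_two, hy_smul_fin_two]
      ext i j
      fin_cases i <;> fin_cases j <;>
        · simp only [Matrix.cons_val', Matrix.cons_val_zero, Matrix.cons_val_one,
            Matrix.head_cons, Matrix.empty_val', Matrix.cons_val_fin_one,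
            Matrix.head_fin_const, Matrix.of_apply, Fin.zero_eta, Fin.mk_one]
          rw [hd₀]
          field_simp [h4]
          ring
end
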